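/- Let V(y₁, y₂) = ((√5 − 1)/24)·y₁⁴ + (1/2)( y₂ + y₁³/3 − ((√5 + 1)/2)·y₁ )² and let b(y₁, y₂) = ( y₂, −[(y₁² − 1)y₂ + y₁] ) be the van der Pol vector field. Then: (i) ⟨b(y), ∇V(y)⟩ = −y₁⁴/3 + ((√5 + 1)/2)·y₁² − ((√5 − 1)/2)·y₂² for all y ∈ ℝ²; (ii) for every c₁ > 0 there exists R > 0 such that for every ε ∈ (0, 1/(6c₁)] and every function σ : ℝ² → ℝ with σ(y)² ≤ c₁(y₁⁴ + y₂² + 1), one has ⟨b(y), ∇V(y)⟩ + (ε/2)·σ(y)² ≤ −(1/5)(y₁⁴ + y₂²) whenever y₁² + y₂² ≥ R. -/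

import Mathlib

open scoped RealInnerProductSpace

noncomputable section

/-- The van der Pol vector field `b(y₁,y₂) = (y₂, −[(y₁² − 1)y₂ + y₁])`. -/
def vdpField (y : EuclideanSpace ℝ (Fin 2)) : EuclideanSpace ℝ (Fin 2) :=
  WithLp.toLp 2 ![y 1, -(((y 0) ^ 2 - 1) * y 1 + y 0)]

/-- Nevelson's Lyapunov function
`V(y₁,y₂) = ((√5−1)/24)y₁⁴ + (1/2)(y₂ + y₁³/3 − ((√5+1)/2)y₁)²`. -/
def vdpLyapunov (y : EuclideanSpace ℝ (Fin 2)) : ℝ :=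
  (Real.sqrt 5 - 1) / 24 * (y 0) ^ 4
    + (1 / 2) * (y 1 + (y 0) ^ 3 / 3 - (Real.sqrt 5 + 1) / 2 * y 0) ^ 2

lemma vdp_hasGradient (y : EuclideanSpace ℝ (Fin 2)) :
    HasGradientAt vdpLyapunov
      ((WithLp.equiv 2 (Fin 2 → ℝ)).symm
        ![ (Real.sqrt 5 - 1) / 24 * (4 * (y 0) ^ 3)
            + (y 1 + (y 0) ^ 3 / 3 - (Real.sqrt 5 + 1) / 2 * y 0)
              * ((y 0) ^ 2 - (Real.sqrt 5 + 1) / 2),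
          (y 1 + (y 0) ^ 3 / 3 - (Real.sqrt 5 + 1) / 2 * y 0) ]) y := by
  rw [hasGradientAt_iff_hasFDerivAt]
  set P0 : EuclideanSpace ℝ (Fin 2) →L[ℝ] ℝ := EuclideanSpace.proj 0 with hP0
  set P1 : EuclideanSpace ℝ (Fin 2) →L[ℝ] ℝ := EuclideanSpace.proj 1 with hP1
  have h0 : HasFDerivAt (fun z : EuclideanSpace ℝ (Fin 2) => z 0) P0 y := P0.hasFDerivAt
  have h1 : HasFDerivAt (fun z : EuclideanSpace ℝ (Fin 2) => z 1) P1 y := P1.hasFDerivAt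
  have hw : HasFDerivAt
      (fun z : EuclideanSpace ℝ (Fin 2) =>
        z 1 + (1/3 : ℝ) * (z 0 * z 0 * z 0) - (Real.sqrt 5 + 1) / 2 * z 0) _ y :=
    (h1.add (((h0.mul h0).mul h0).const_mul (1/3 : ℝ))).sub
      (h0.const_mul ((Real.sqrt 5 + 1) / 2))
  have H := ((((h0.mul h0).mul h0).mul h0).const_mul ((Real.sqrt 5 - 1) / 24)).add
    ((hw.mul hw).const_mul (1/2 : ℝ))
  have hfun : vdpLyapunov = (fun z : EuclideanSpace ℝ (Fin 2) =>
      (Real.sqrt 5 - 1) / 24 * (z 0 * z 0 * z 0 * z 0)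
        + 1/2 * ((z 1 + (1/3 : ℝ) * (z 0 * z 0 * z 0) - (Real.sqrt 5 + 1) / 2 * z 0)
            * (z 1 + (1/3 : ℝ) * (z 0 * z 0 * z 0) - (Real.sqrt 5 + 1) / 2 * z 0))) := by
    funext z; simp only [vdpLyapunov]; ring
  rw [hfun]
  refine H.congr_fderiv ?_
  ext v
  simp [InnerProductSpace.toDual, PiLp.inner_apply, Fin.sum_univ_two, hP0, hP1]
  ring

lemma vdp_inner (y : EuclideanSpace ℝ (Fin 2)) :
    ⟪vdpField y, gradient vdpLyapunov y⟫
      = -(y 0) ^ 4 / 3 + (Real.sqrt 5 + 1) / 2 * (y 0) ^ 2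
          - (Real.sqrt 5 - 1) / 2 * (y 1) ^ 2 := by
  rw [(vdp_hasGradient y).gradient]
  have hs5 : Real.sqrt 5 ^ 2 = 5 := Real.sq_sqrt (by norm_num)
  simp [vdpField, PiLp.inner_apply, Fin.sum_univ_two, 
    RCLike.inner_apply, conj_trivial]
  linear_combination (y 0 * y 1 / 4) * hs5

lemma vdp_aux_ineq (a b s5 : ℝ) (hb : 0 ≤ b) (hab : a + b ≥ 1000)
    (h2 : 2 ≤ s5) (h3 : s5 ≤ 3) :
    -a^2/3 + (s5+1)/2 * a - (s5-1)/2 * b + (a^2 + b + 1)/12 ≤ -(1/5)*(a^2+b) := by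
  nlinarith [sq_nonneg (a - 23), mul_nonneg (sub_nonneg.2 h2) hb, sq_nonneg a]

/-- **Statement 17.** (i) `⟨b(y), ∇V(y)⟩ = −y₁⁴/3 + ((√5+1)/2)y₁² − ((√5−1)/2)y₂²`;
(ii) for every `c₁ > 0` there is `R > 0` such that for every `ε ∈ (0, 1/(6c₁)]` and
every `σ` with `σ(y)² ≤ c₁(y₁⁴ + y₂² + 1)`, one has
`⟨b(y), ∇V(y)⟩ + (ε/2)σ(y)² ≤ −(1/5)(y₁⁴ + y₂²)` whenever `y₁² + y₂² ≥ R`. -/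
theorem vdp_lyapunov_estimates :
    (∀ y : EuclideanSpace ℝ (Fin 2),
      ⟪vdpField y, gradient vdpLyapunov y⟫
        = -(y 0) ^ 4 / 3 + (Real.sqrt 5 + 1) / 2 * (y 0) ^ 2
          - (Real.sqrt 5 - 1) / 2 * (y 1) ^ 2) ∧
    (∀ c₁ : ℝ, 0 < c₁ → ∃ R : ℝ, 0 < R ∧
      ∀ ε : ℝ, ε ∈ Set.Ioc (0:ℝ) (1 / (6 * c₁)) →
      ∀ σ : EuclideanSpace ℝ (Fin 2) → ℝ,
        (∀ y, (σ y) ^ 2 ≤ c₁ * ((y 0) ^ 4 + (y 1) ^ 2 + 1)) →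
        ∀ y : EuclideanSpace ℝ (Fin 2), (y 0) ^ 2 + (y 1) ^ 2 ≥ R →
          ⟪vdpField y, gradient vdpLyapunov y⟫ + ε / 2 * (σ y) ^ 2
            ≤ -(1 / 5) * ((y 0) ^ 4 + (y 1) ^ 2)) := by
  constructor
  · exact vdp_inner
  · intro c₁ hc₁
    refine ⟨1000, by norm_num, ?_⟩
    rintro ε ⟨hε1, hε2⟩ σ hσ y hy
    rw [vdp_inner y]
    have h6 : (0:ℝ) < 6 * c₁ := by linarith
    have hεc : ε * (6 * c₁) ≤ 1 := by
      have := mul_le_mul_of_nonneg_right hε2 h6.le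
      rwa [one_div, inv_mul_cancel₀ h6.ne'] at this
    have hXnn : (0:ℝ) ≤ (y 0) ^ 4 + (y 1) ^ 2 + 1 := by positivity
    have key : ε / 2 * (σ y) ^ 2 ≤ ((y 0) ^ 4 + (y 1) ^ 2 + 1) / 12 := by
      have h1 : ε / 2 * (σ y) ^ 2 ≤ ε / 2 * (c₁ * ((y 0) ^ 4 + (y 1) ^ 2 + 1)) :=
        mul_le_mul_of_nonneg_left (hσ y) (by linarith)
      nlinarith [mul_nonneg (sub_nonneg.2 hεc) hXnn]
    have h2 : 2 ≤ Real.sqrt 5 := by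
      nlinarith [Real.sq_sqrt (show (0:ℝ) ≤ 5 by norm_num), Real.sqrt_nonneg 5]
    have h3 : Real.sqrt 5 ≤ 3 := by
      nlinarith [Real.sq_sqrt (show (0:ℝ) ≤ 5 by norm_num), Real.sqrt_nonneg 5]
    have := vdp_aux_ineq ((y 0) ^ 2) ((y 1) ^ 2) (Real.sqrt 5) (sq_nonneg _) hy h2 h3
    nlinarith [this, key]

end
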